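/- Under assumptions (A1)-(A3), the z-block of the augmented Lagrangian satisfies, at every iteration t: L({x_k^t}, z^{t+1}, {y_k^t}) − L({x_k^t}, z^t, {y_k^t}) ≤ − Σ_{k ∈ S^t} (ρ_k/2) ‖z_k^{t+1} − z_k^t‖², where S^t is the set of nodes that carry out the z-update at time t. -/

import Mathlib

open Filter Topology RealInnerProductSpace

noncomputable section

/-- Zero-padded restriction of a vector of nodal variables to a neighborhood:
coordinates outside the neighborhood are set to zero. -/
def restr {K : ℕ} (Nk : Finset (Fin K)) (v : Fin K → ℝ) : EuclideanSpace ℝ (Fin K) :=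
  WithLp.toLp 2 (fun j => if j ∈ Nk then v j else 0)

/-- The setting of the asynchronous proximal ADMM: network data, assumptions
(A1)-(A2), and the algorithmic update equations (i)-(iii) together with the
delay bounds and the update-frequency condition. -/
structure ProxADMM (K : ℕ) where
  /-- neighborhoods, `j ∈ Nb k` means `j ∈ N_k` -/
  Nb : Fin K → Finset (Fin K)
  self_mem : ∀ k, k ∈ Nb k
  symm : ∀ k j, j ∈ Nb k ↔ k ∈ Nb j
  /-- local cost of node `k`, as a function of the zero-padded neighborhood variables -/
  g : Fin K → EuclideanSpace ℝ (Fin K) → ℝ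
  g_local : ∀ k v w, (∀ j ∈ Nb k, v j = w j) → g k v = g k w
  /-- the Lipschitz constants of (A1) -/
  L : Fin K → ℝ
  L_pos : ∀ k, 0 < L k
  g_diff : ∀ k, Differentiable ℝ (g k)
  /-- (A1): the gradient of `g k` is `L k`-Lipschitz -/
  g_grad_lip : ∀ k v w, ‖gradient (g k) v - gradient (g k) w‖ ≤ L k * ‖v - w‖
  /-- the convex nonsmooth part -/
  h : Fin K → ℝ → ℝ
  h_convex : ∀ k, ConvexOn ℝ Set.univ (h k)
  /-- the constraint sets -/
  Xs : Fin K → Set ℝ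
  Xs_nonempty : ∀ k, (Xs k).Nonempty
  Xs_compact : ∀ k, IsCompact (Xs k)
  Xs_convex : ∀ k, Convex ℝ (Xs k)
  /-- (A2): `g k` is bounded below over the constraint set -/
  g_bddBelow : ∀ k, ∃ b, ∀ v : Fin K → ℝ, (∀ j, v j ∈ Xs j) → b ≤ g k (restr (Nb k) v)
  /-- penalty parameters -/
  ρ : Fin K → ℝ
  ρ_pos : ∀ k, 0 < ρ k
  /-- update frequencies `f_k` -/
  freq : Fin K → ℝ
  freq_pos : ∀ k, 0 < freq k
  freq_le_one : ∀ k, freq k ≤ 1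
  /-- maximum delays `T_k` -/
  Td : Fin K → ℕ
  /-- updating sets `S^t` -/
  Sset : ℕ → Finset (Fin K)
  /-- delayed index: `τ t k = [t+1]_k` -/
  τ : ℕ → Fin K → ℕ
  τ_le : ∀ t k, τ t k ≤ t + 1
  τ_ge : ∀ t k, t + 1 ≤ τ t k + Td k
  /-- iterates -/
  x : ℕ → Fin K → Fin K → ℝ
  z : ℕ → Fin K → ℝ
  y : ℕ → Fin K → Fin K → ℝ
  z_init_mem : ∀ j, z 0 j ∈ Xs j
  /-- (i): feasibility of the `z`-update -/
  z_update_mem : ∀ t j, j ∈ Sset t → z (t + 1) j ∈ Xs j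
  /-- (i): for `j ∈ S^t`, `z_j^{t+1}` minimizes the `j`-th block over `X_j` -/
  z_update_min : ∀ t j, j ∈ Sset t → IsMinOn
      (fun w => h j w + ∑ k ∈ Nb j, (y t k j * (x t k j - w) + ρ k / 2 * (x t k j - w) ^ 2))
      (Xs j) (z (t + 1) j)
  /-- (i): non-updating nodes keep their old value -/
  z_noupdate : ∀ t j, j ∉ Sset t → z (t + 1) j = z t j
  /-- (ii): proximal (linearized) `x`-update with delayed gradient -/
  x_update : ∀ t k, ∀ j ∈ Nb k,
      x (t + 1) k j = z (t + 1) j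
        - (1 / ρ k) * (gradient (g k) (restr (Nb k) (z (τ t k))) j + y t k j)
  /-- (iii): dual update -/
  y_update : ∀ t k, ∀ j ∈ Nb k,
      y (t + 1) k j = y t k j + ρ k * (x (t + 1) k j - z (t + 1) j)
  /-- in any window of `T` consecutive iterations node `k` updates at least `f_k T` times -/
  update_freq : ∀ k (t₀ T : ℕ),
      freq k * T ≤ ((Finset.Ico t₀ (t₀ + T)).filter (fun t => k ∈ Sset t)).card

/-- The augmented Lagrangian. -/
def ProxADMM.Lag {K : ℕ} (P : ProxADMM K) (xx : Fin K → Fin K → ℝ) (zz : Fin K → ℝ)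
    (yy : Fin K → Fin K → ℝ) : ℝ :=
  ∑ k, (P.g k (restr (P.Nb k) (xx k)) + P.h k (zz k)
    + ∑ j ∈ P.Nb k, (yy k j * (xx k j - zz j) + P.ρ k / 2 * (xx k j - zz j) ^ 2))

end

/-!
Regrouping the coupling terms of the augmented Lagrangian by their `z`-coordinate (using the
symmetry of the neighborhoods) writes it as the `g`-terms, which do not involve `z`, plus the
sum over `j` of the one-dimensional objectives minimized in the `z`-update (i). The `j`-th
objective is `h_j` plus quadratics of curvature `ρ_k`, `k ∈ N_j`, so it is `ρ_j`-strongly convex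
on `X_j` because `j ∈ N_j`. A strongly convex function exceeds its minimum over a convex set at
any feasible point by `m / 2` times the squared distance to the minimizer (compare with the
convex combination `(1 - a) x + a y` and let `a → 0`); applied to the old iterate `z_j^t`, this
gives the decrease for `j ∈ S^t`, while the other blocks do not move.
-/

section StrongConvexity

variable {E : Type*} [NormedAddCommGroup E] [NormedSpace ℝ E] {s : Set E} {m n : ℝ}
  {f g : E → ℝ}

lemma StrongConvexOn.add (hf : StrongConvexOn s m f) (hg : StrongConvexOn s n g) :
    StrongConvexOn s (m + n) (f + g) := by
  refine (UniformConvexOn.add hf hg).mono fun r ↦ le_of_eq ?_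
  simp only [Pi.add_apply]
  ring

lemma ConvexOn.add_strongConvexOn (hf : ConvexOn ℝ s f) (hg : StrongConvexOn s m g) :
    StrongConvexOn s m (f + g) := by
  simpa using (strongConvexOn_zero.mpr hf).add hg

lemma strongConvexOn_sum {ι : Type*} (hs : Convex ℝ s) (t : Finset ι) {m : ι → ℝ}
    {f : ι → E → ℝ} (hf : ∀ i ∈ t, StrongConvexOn s (m i) (f i)) :
    StrongConvexOn s (∑ i ∈ t, m i) (fun x ↦ ∑ i ∈ t, f i x) := by
  classical
  induction t using Finset.induction_on with
  | empty => simpa using convexOn_const (0 : ℝ) hs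
  | insert i t hi ih =>
    simp only [Finset.sum_insert hi]
    exact (hf i (t.mem_insert_self i)).add
      (ih fun j hj ↦ hf j (Finset.mem_insert_of_mem hj))

lemma StrongConvexOn.add_sq_norm_sub_le_of_isMinOn (hf : StrongConvexOn s m f) {x y : E}
    (hx : x ∈ s) (hy : y ∈ s) (hmin : IsMinOn f s x) :
    f x + m / 2 * ‖y - x‖ ^ 2 ≤ f y := by
  set c := m / 2 * ‖y - x‖ ^ 2 with hc
  have hstep : ∀ a ∈ Set.Ioo (0 : ℝ) 1, f x + (1 - a) * c ≤ f y := by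
    rintro a ⟨ha₀, ha₁⟩
    have hmem : (1 - a) • x + a • y ∈ s := hf.1 hx hy (by linarith) ha₀.le (by ring)
    have hconv := hf.2 hx hy (by linarith : (0 : ℝ) ≤ 1 - a) ha₀.le (by ring)
    have hle : f x ≤ f ((1 - a) • x + a • y) := hmin hmem
    rw [smul_eq_mul, smul_eq_mul, norm_sub_rev] at hconv
    beta_reduce at hconv
    rw [← hc] at hconv
    have : a * (f x + (1 - a) * c) ≤ a * f y := by linarith
    exact le_of_mul_le_mul_left this ha₀
  have hlim : Filter.Tendsto (fun a : ℝ ↦ f x + (1 - a) * c) (𝓝[>] 0) (𝓝 (f x + c)) := by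
    have : Continuous fun a : ℝ ↦ f x + (1 - a) * c := by fun_prop
    simpa using (this.tendsto 0).mono_left nhdsWithin_le_nhds
  exact le_of_tendsto hlim (Filter.mem_of_superset (Ioo_mem_nhdsGT one_pos) hstep)

end StrongConvexity

lemma strongConvexOn_penalty {s : Set ℝ} (hs : Convex ℝ s) (y x ρ : ℝ) :
    StrongConvexOn s ρ (fun w : ℝ ↦ y * (x - w) + ρ / 2 * (x - w) ^ 2) := by
  rw [strongConvexOn_iff_convex]
  refine (((LinearMap.mulLeft ℝ (-y - ρ * x)).convexOn hs).add_const
    (y * x + ρ / 2 * x ^ 2)).congr fun w _ ↦ ?_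
  simp only [Pi.add_apply, LinearMap.mulLeft_apply, Real.norm_eq_abs, sq_abs]
  ring

namespace ProxADMM

variable {K : ℕ} (P : ProxADMM K)

/-- The `j`-th block of the `z`-subproblem (i). -/
noncomputable def zBlock (xx yy : Fin K → Fin K → ℝ) (j : Fin K) (w : ℝ) : ℝ :=
  P.h j w + ∑ k ∈ P.Nb j, (yy k j * (xx k j - w) + P.ρ k / 2 * (xx k j - w) ^ 2)

lemma Lag_eq_sum_g_add_sum_zBlock (xx : Fin K → Fin K → ℝ) (zz : Fin K → ℝ)
    (yy : Fin K → Fin K → ℝ) :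
    P.Lag xx zz yy = ∑ k, P.g k (restr (P.Nb k) (xx k)) + ∑ j, P.zBlock xx yy j (zz j) := by
  have hswap : ∑ k, ∑ j ∈ P.Nb k, (yy k j * (xx k j - zz j) + P.ρ k / 2 * (xx k j - zz j) ^ 2)
      = ∑ j, ∑ k ∈ P.Nb j, (yy k j * (xx k j - zz j) + P.ρ k / 2 * (xx k j - zz j) ^ 2) :=
    Finset.sum_comm' fun k j ↦ by simp [P.symm k j]
  unfold Lag zBlock
  rw [Finset.sum_add_distrib, Finset.sum_add_distrib, Finset.sum_add_distrib, hswap,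
    add_assoc]

lemma strongConvexOn_zBlock (xx yy : Fin K → Fin K → ℝ) (j : Fin K) :
    StrongConvexOn (P.Xs j) (P.ρ j) (P.zBlock xx yy j) := by
  have hpen := strongConvexOn_sum (P.Xs_convex j) (P.Nb j)
    fun k _ ↦ strongConvexOn_penalty (P.Xs_convex j) (yy k j) (xx k j) (P.ρ k)
  exact (((P.h_convex j).subset (Set.subset_univ _) (P.Xs_convex j)).add_strongConvexOn hpen).mono
    (Finset.single_le_sum (fun k _ ↦ (P.ρ_pos k).le) (P.self_mem j))

lemma z_mem (t : ℕ) (j : Fin K) : P.z t j ∈ P.Xs j := by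
  induction t with
  | zero => exact P.z_init_mem j
  | succ t ih =>
    by_cases hj : j ∈ P.Sset t
    · exact P.z_update_mem t j hj
    · rwa [P.z_noupdate t j hj]

lemma zBlock_succ_sub_le (t : ℕ) (j : Fin K) :
    P.zBlock (P.x t) (P.y t) j (P.z (t + 1) j) - P.zBlock (P.x t) (P.y t) j (P.z t j)
      ≤ if j ∈ P.Sset t then -(P.ρ j / 2 * ‖P.z (t + 1) j - P.z t j‖ ^ 2) else 0 := by
  split_ifs with hj
  · have := (P.strongConvexOn_zBlock (P.x t) (P.y t) j).add_sq_norm_sub_le_of_isMinOn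
      (P.z_update_mem t j hj) (P.z_mem t j) (P.z_update_min t j hj)
    rw [norm_sub_rev] at this
    linarith
  · rw [P.z_noupdate t j hj, sub_self]

end ProxADMM

theorem prox_admm_z_block_bound_general {K : ℕ} (P : ProxADMM K)
    (t : ℕ) :
    P.Lag (P.x t) (P.z (t + 1)) (P.y t) - P.Lag (P.x t) (P.z t) (P.y t)
      ≤ - ∑ k ∈ P.Sset t, P.ρ k / 2 * ‖P.z (t + 1) k - P.z t k‖ ^ 2 := by
  calc P.Lag (P.x t) (P.z (t + 1)) (P.y t) - P.Lag (P.x t) (P.z t) (P.y t)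
      = ∑ j, (P.zBlock (P.x t) (P.y t) j (P.z (t + 1) j)
          - P.zBlock (P.x t) (P.y t) j (P.z t j)) := by
        rw [P.Lag_eq_sum_g_add_sum_zBlock, P.Lag_eq_sum_g_add_sum_zBlock, Finset.sum_sub_distrib]
        ring
    _ ≤ ∑ j, if j ∈ P.Sset t then -(P.ρ j / 2 * ‖P.z (t + 1) j - P.z t j‖ ^ 2) else 0 :=
        Finset.sum_le_sum fun j _ ↦ P.zBlock_succ_sub_le t j
    _ = - ∑ k ∈ P.Sset t, P.ρ k / 2 * ‖P.z (t + 1) k - P.z t k‖ ^ 2 := by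
        rw [Finset.sum_ite_mem, Finset.univ_inter, Finset.sum_neg_distrib]

/-- `z`-block bound for the augmented Lagrangian (asynchronous proximal ADMM,
assumptions (A1)-(A3)): the `z`-update decreases the Lagrangian by at least
`Σ_{k∈S^t} (ρ_k/2) ‖z_k^{t+1} - z_k^t‖²`. -/
theorem prox_admm_z_block_bound {K : ℕ} (P : ProxADMM K)
    (α β : Fin K → ℝ)
    (hα : ∀ k, α k = P.ρ k * P.freq k / 2
      - (7 * P.L k / (2 * P.ρ k ^ 2) + 1 / P.ρ k) * ((P.Nb k).card : ℝ) * P.L k ^ 2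
          * ((P.Td k : ℝ) + 1) ^ 2
      - ((P.Nb k).card : ℝ) * P.L k * (P.Td k : ℝ) ^ 2 / 2)
    (hβ : ∀ k, β k = P.ρ k - 7 * P.L k)
    (hA3 : ∀ k, 0 < α k ∧ 0 < β k)
    (t : ℕ) :
    P.Lag (P.x t) (P.z (t + 1)) (P.y t) - P.Lag (P.x t) (P.z t) (P.y t)
      ≤ - ∑ k ∈ P.Sset t, P.ρ k / 2 * ‖P.z (t + 1) k - P.z t k‖ ^ 2 :=
  prox_admm_z_block_bound_general P t
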